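/- Let R be an alternative ring with a nontrivial idempotent e₁ satisfying conditions (i) and (ii). Let D : R → R be a map (not assumed additive) satisfying D([[x,y],z]) = [[D(x),y],z] + [[x,D(y)],z] + [[x,y],D(z)] for all x, y, z ∈ R. Then D is almost additive: for all a, b ∈ R there exists w ∈ Z(R) such that D(a + b) = D(a) + D(b) + w. -/

import Mathlib

/-- The commutative center of a (possibly non-associative, non-unital) ring. -/
def rctr (R : Type*) [NonUnitalNonAssocRing R] : Set R := {z | ∀ x, z * x = x * z}

/-- `R` is an alternative ring. -/
def IsAlt (R : Type*) [NonUnitalNonAssocRing R] : Prop :=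
  ∀ x y : R, (x * x) * y = x * (x * y) ∧ (y * x) * x = y * (x * x)

/-- Peirce components relative to an idempotent `e`. -/
def P11 {R : Type*} [NonUnitalNonAssocRing R] (e : R) : Set R := {x | e * x = x ∧ x * e = x}
def P12 {R : Type*} [NonUnitalNonAssocRing R] (e : R) : Set R := {x | e * x = x ∧ x * e = 0}
def P21 {R : Type*} [NonUnitalNonAssocRing R] (e : R) : Set R := {x | e * x = 0 ∧ x * e = x}
def P22 {R : Type*} [NonUnitalNonAssocRing R] (e : R) : Set R := {x | e * x = 0 ∧ x * e = 0}

/-- The iterated commutator `p_n`: `p_1(x) = x`,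
`p_n(x_1,…,x_n) = [p_{n-1}(x_1,…,x_{n-1}), x_n]`. -/
def pn {R : Type*} [NonUnitalNonAssocRing R] : (n : ℕ) → (Fin n → R) → R
  | 0, _ => 0
  | 1, x => x 0
  | (m+2), x =>
      pn (m+1) (fun i => x i.castSucc) * x (Fin.last (m+1))
        - x (Fin.last (m+1)) * pn (m+1) (fun i => x i.castSucc)

/-- A (not necessarily additive) map `D` is a multiplicative Lie `n`-derivation. -/
def IsMultLieNDeriv {R : Type*} [NonUnitalNonAssocRing R] (n : ℕ) (D : R → R) : Prop :=
  ∀ x : Fin n → R, D (pn n x) = ∑ i : Fin n, pn n (Function.update x i (D (x i)))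

/-!
Let `δ(a, b) = D (a + b) - D a - D b`. Since `[[·, y], z]` is additive, the identity for `D`
gives `[[δ(a, b), y], z] = δ([[a, y], z], [[b, y], z])`: the map `[[δ, ·], z]` is additive
although `D` is not.

Take `z = e`. For any `s`, `[s, e] = -s₁₂ + s₂₁` lies in `R₁₂ + R₂₁`, and `D` is additive on
`R₁₂ + R₂₁`. This is seen through `y = e - m` with `m ∈ R₁₂`: the map `[[·, e - m], e]` sends
`e` to `m`, fixes `R₂₁` and sends `p + [p, m]` to `p` for `p ∈ R₁₂`, while at `y = e` and
`y = m` the defects reduce to `D 0 = 0` or to the mixed case `δ(m, n)`, settled first; `R₂₁` is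
symmetric with `y = e - n`.

Hence `[[δ(a, b), y], e] = 0` for every `y`. At `y = e` this puts `δ(a, b)` in `R₁₁ + R₂₂`;
at `y = x ∈ R₁₂`, where `[δ(a, b), x] ∈ R₁₂`, it reads `[δ(a, b), x] = 0`, so condition (i) makes
`δ(a, b)` central.
-/

section

variable {R : Type*} [NonUnitalNonAssocRing R]

def lieComm (x y : R) : R := x * y - y * x

def lieTriple (x y z : R) : R := lieComm (lieComm x y) z

def addDefect (D : R → R) (x y : R) : R := D (x + y) - D x - D y

def IsMultLieTripleDeriv (D : R → R) : Prop :=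
  ∀ x y z : R, D (lieTriple x y z) =
    lieTriple (D x) y z + lieTriple x (D y) z + lieTriple x y (D z)

def peirce11 (e x : R) : R := e * (x * e)

def peirce12 (e x : R) : R := e * x - e * (x * e)

def peirce21 (e x : R) : R := x * e - e * (x * e)

def peirce22 (e x : R) : R := x - e * x - x * e + e * (x * e)

section Commutators

variable {e x y m n : R}

theorem lieTriple_add_left (x x' y z : R) :
    lieTriple (x + x') y z = lieTriple x y z + lieTriple x' y z := by
  simp only [lieTriple, lieComm, add_mul, mul_add, sub_mul, mul_sub]; abel

theorem lieTriple_sub_left (x x' y z : R) :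
    lieTriple (x - x') y z = lieTriple x y z - lieTriple x' y z := by
  simp only [lieTriple, lieComm, sub_mul, mul_sub]; abel

theorem lieTriple_sub_middle (x y y' z : R) :
    lieTriple x (y - y') z = lieTriple x y z - lieTriple x y' z := by
  simp only [lieTriple, lieComm, sub_mul, mul_sub]; abel

theorem lieTriple_self_left (x z : R) : lieTriple x x z = 0 := by
  simp [lieTriple, lieComm]

theorem lieComm_eq_neg_peirce12_add_peirce21 (e x : R) :
    lieComm x e = -peirce12 e x + peirce21 e x := by
  simp only [lieComm, peirce12, peirce21]; abel

theorem lieComm_idem_of_mem_P12 (hm : m ∈ P12 e) : lieComm m e = -m := by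
  simp [lieComm, hm.1, hm.2]

theorem lieComm_idem_of_mem_P21 (hn : n ∈ P21 e) : lieComm n e = n := by
  simp [lieComm, hn.1, hn.2]

theorem lieTriple_idem_idem_of_mem_P12 (hm : m ∈ P12 e) : lieTriple m e e = m := by
  simp [lieTriple, lieComm, hm.1, hm.2]

theorem lieTriple_idem_idem_of_mem_P21 (hn : n ∈ P21 e) : lieTriple n e e = n := by
  simp [lieTriple, lieComm, hn.1, hn.2]

theorem lieTriple_idem_left_of_mem_P12 (hm : m ∈ P12 e) : lieTriple e m e = -m := by
  simp [lieTriple, lieComm, hm.1, hm.2]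

theorem lieTriple_idem_left_of_mem_P21 (hn : n ∈ P21 e) : lieTriple e n e = -n := by
  simp [lieTriple, lieComm, hn.1, hn.2]

theorem neg_mem_P12 (hm : m ∈ P12 e) : -m ∈ P12 e := by
  simp [P12, hm.1, hm.2]

theorem neg_mem_P21 (hn : n ∈ P21 e) : -n ∈ P21 e := by
  simp [P21, hn.1, hn.2]

theorem add_mem_P12 (hx : x ∈ P12 e) (hy : y ∈ P12 e) : x + y ∈ P12 e := by
  simp [P12, mul_add, add_mul, hx.1, hx.2, hy.1, hy.2]

theorem add_mem_P21 (hx : x ∈ P21 e) (hy : y ∈ P21 e) : x + y ∈ P21 e := by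
  simp [P21, mul_add, add_mul, hx.1, hx.2, hy.1, hy.2]

theorem sub_mem_P12 (hx : x ∈ P12 e) (hy : y ∈ P12 e) : x - y ∈ P12 e := by
  simp [P12, mul_sub, sub_mul, hx.1, hx.2, hy.1, hy.2]

end Commutators

namespace IsAlt

variable {e x y m n p q u v : R}

theorem left_linear (halt : IsAlt R) (a b c : R) :
    (a * b) * c + (b * a) * c = a * (b * c) + b * (a * c) := by
  have h := (halt (a + b) c).1
  simp only [add_mul, mul_add, (halt a c).1, (halt b c).1] at h
  linear_combination (norm := abel) h

theorem right_linear (halt : IsAlt R) (a b c : R) :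
    (a * b) * c + (a * c) * b = a * (b * c) + a * (c * b) := by
  have h := (halt (b + c) a).2
  simp only [add_mul, mul_add, (halt b a).2, (halt c a).2] at h
  linear_combination (norm := abel) h

theorem idem_mul_idem_mul (halt : IsAlt R) (he : e * e = e) (x : R) : e * (e * x) = e * x := by
  rw [← (halt e x).1, he]

theorem mul_idem_mul_idem (halt : IsAlt R) (he : e * e = e) (x : R) : (x * e) * e = x * e := by
  rw [(halt e x).2, he]

theorem idem_mul_mul_idem (halt : IsAlt R) (he : e * e = e) (x : R) :
    (e * x) * e = e * (x * e) := by
  have h := halt.left_linear e x e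
  rw [he, halt.mul_idem_mul_idem he] at h
  exact add_right_cancel h

theorem peirce11_mem (halt : IsAlt R) (he : e * e = e) (x : R) : peirce11 e x ∈ P11 e := by
  constructor <;>
    simp only [peirce11, ← halt.idem_mul_mul_idem he, halt.mul_idem_mul_idem he,
      halt.idem_mul_idem_mul he]

theorem peirce12_mem (halt : IsAlt R) (he : e * e = e) (x : R) : peirce12 e x ∈ P12 e := by
  constructor <;>
    simp only [peirce12, mul_sub, sub_mul, ← halt.idem_mul_mul_idem he,
      halt.mul_idem_mul_idem he, halt.idem_mul_idem_mul he, sub_self]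

theorem peirce21_mem (halt : IsAlt R) (he : e * e = e) (x : R) : peirce21 e x ∈ P21 e := by
  constructor <;>
    simp only [peirce21, mul_sub, sub_mul, ← halt.idem_mul_mul_idem he,
      halt.mul_idem_mul_idem he, halt.idem_mul_idem_mul he, sub_self]

theorem peirce22_mem (halt : IsAlt R) (he : e * e = e) (x : R) : peirce22 e x ∈ P22 e := by
  constructor <;>
    simp only [peirce22, mul_add, add_mul, mul_sub, sub_mul, ← halt.idem_mul_mul_idem he,
      halt.mul_idem_mul_idem he, halt.idem_mul_idem_mul he] <;> abel

theorem idem_mul_mul (halt : IsAlt R) (e x y : R) :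
    e * (x * y) = (e * x) * y + (x * e) * y - x * (e * y) := by
  linear_combination (norm := abel) -halt.left_linear e x y

theorem mul_mul_idem (halt : IsAlt R) (e x y : R) :
    (x * y) * e = x * (y * e) + x * (e * y) - (x * e) * y := by
  linear_combination (norm := abel) halt.right_linear x y e

theorem mul_mem_P21_of_mem_P12 (halt : IsAlt R) (hx : x ∈ P12 e) (hy : y ∈ P12 e) :
    x * y ∈ P21 e :=
  ⟨by rw [halt.idem_mul_mul]; simp [hx.1, hx.2, hy.1],
    by rw [halt.mul_mul_idem]; simp [hx.2, hy.1, hy.2]⟩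

theorem mul_mem_P12_of_mem_P21 (halt : IsAlt R) (hx : x ∈ P21 e) (hy : y ∈ P21 e) :
    x * y ∈ P12 e :=
  ⟨by rw [halt.idem_mul_mul]; simp [hx.1, hx.2, hy.1],
    by rw [halt.mul_mul_idem]; simp [hx.2, hy.1, hy.2]⟩

theorem mul_mem_P11_of_mem_P12_P21 (halt : IsAlt R) (hx : x ∈ P12 e) (hy : y ∈ P21 e) :
    x * y ∈ P11 e :=
  ⟨by rw [halt.idem_mul_mul]; simp [hx.1, hx.2, hy.1],
    by rw [halt.mul_mul_idem]; simp [hx.2, hy.1, hy.2]⟩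

theorem mul_mem_P22_of_mem_P21_P12 (halt : IsAlt R) (hx : x ∈ P21 e) (hy : y ∈ P12 e) :
    x * y ∈ P22 e :=
  ⟨by rw [halt.idem_mul_mul]; simp [hx.1, hx.2, hy.1],
    by rw [halt.mul_mul_idem]; simp [hx.2, hy.1, hy.2]⟩

theorem mul_mem_P12_of_mem_P11_P12 (halt : IsAlt R) (hx : x ∈ P11 e) (hy : y ∈ P12 e) :
    x * y ∈ P12 e :=
  ⟨by rw [halt.idem_mul_mul]; simp [hx.1, hx.2, hy.1],
    by rw [halt.mul_mul_idem]; simp [hx.2, hy.1, hy.2]⟩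

theorem mul_mem_P12_of_mem_P12_P22 (halt : IsAlt R) (hx : x ∈ P12 e) (hy : y ∈ P22 e) :
    x * y ∈ P12 e :=
  ⟨by rw [halt.idem_mul_mul]; simp [hx.1, hx.2, hy.1],
    by rw [halt.mul_mul_idem]; simp [hx.2, hy.1, hy.2]⟩

theorem mul_eq_zero_of_mem_P22_P12 (halt : IsAlt R) (hx : x ∈ P22 e) (hy : y ∈ P12 e) :
    x * y = 0 := by
  have h₁ := halt.right_linear x e y
  have h₂ := halt.left_linear x y e
  have h₃ := halt.right_linear y x e
  simp only [hx.1, hx.2, hy.1, hy.2, zero_mul, mul_zero] at h₁ h₂ h₃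
  linear_combination (norm := abel) -h₁ + h₂ - h₃

theorem mul_eq_zero_of_mem_P12_P11 (halt : IsAlt R) (hx : x ∈ P12 e) (hy : y ∈ P11 e) :
    x * y = 0 := by
  have h₁ := halt.right_linear x e y
  have h₂ := halt.left_linear x y e
  have h₃ := halt.right_linear y x e
  simp only [hx.1, hx.2, hy.1, hy.2, zero_mul, mul_zero] at h₁ h₂ h₃
  linear_combination (norm := abel) -h₁ + h₂ - h₃

theorem lieTriple_of_mem_P12_P21 (halt : IsAlt R) (hm : m ∈ P12 e) (hn : n ∈ P21 e) :
    lieTriple m n e = 0 := by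
  have hmn := halt.mul_mem_P11_of_mem_P12_P21 hm hn
  have hnm := halt.mul_mem_P22_of_mem_P21_P12 hn hm
  simp [lieTriple, lieComm, mul_sub, sub_mul, hmn.1, hmn.2, hnm.1, hnm.2]

theorem lieTriple_of_mem_P21_P12 (halt : IsAlt R) (hn : n ∈ P21 e) (hm : m ∈ P12 e) :
    lieTriple n m e = 0 := by
  have hmn := halt.mul_mem_P11_of_mem_P12_P21 hm hn
  have hnm := halt.mul_mem_P22_of_mem_P21_P12 hn hm
  simp [lieTriple, lieComm, mul_sub, sub_mul, hmn.1, hmn.2, hnm.1, hnm.2]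

theorem lieComm_mem_P21_of_mem_P12 (halt : IsAlt R) (hm : m ∈ P12 e) (hp : p ∈ P12 e) :
    lieComm m p ∈ P21 e := by
  have hmp := halt.mul_mem_P21_of_mem_P12 hm hp
  have hpm := halt.mul_mem_P21_of_mem_P12 hp hm
  simp [lieComm, P21, mul_sub, sub_mul, hmp.1, hmp.2, hpm.1, hpm.2]

theorem lieComm_mem_P12_of_mem_P21 (halt : IsAlt R) (hn : n ∈ P21 e) (hq : q ∈ P21 e) :
    lieComm n q ∈ P12 e := by
  have hnq := halt.mul_mem_P12_of_mem_P21 hn hq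
  have hqn := halt.mul_mem_P12_of_mem_P21 hq hn
  simp [lieComm, P12, mul_sub, sub_mul, hnq.1, hnq.2, hqn.1, hqn.2]

theorem lieComm_add_mem_P12_of_mem_P11_P22 (halt : IsAlt R) (hu : u ∈ P11 e) (hv : v ∈ P22 e)
    (hx : x ∈ P12 e) : lieComm (u + v) x ∈ P12 e := by
  have h : lieComm (u + v) x = u * x - x * v := by
    simp only [lieComm, add_mul, mul_add, halt.mul_eq_zero_of_mem_P22_P12 hv hx,
      halt.mul_eq_zero_of_mem_P12_P11 hx hu]
    abel
  rw [h]
  exact sub_mem_P12 (halt.mul_mem_P12_of_mem_P11_P12 hu hx)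
    (halt.mul_mem_P12_of_mem_P12_P22 hx hv)

theorem lieTriple_idem_idem_eq_peirce12_add_peirce21 (halt : IsAlt R) (he : e * e = e) (x : R) :
    lieTriple x e e = peirce12 e x + peirce21 e x := by
  obtain ⟨h₁₂, h₁₂'⟩ := halt.peirce12_mem he x
  obtain ⟨h₂₁, h₂₁'⟩ := halt.peirce21_mem he x
  rw [lieTriple, lieComm_eq_neg_peirce12_add_peirce21 e x, lieComm]
  simp only [add_mul, mul_add, neg_mul, mul_neg, h₁₂, h₁₂', h₂₁, h₂₁']
  abel

theorem exists_mem_P11_P22_of_lieTriple_idem_idem_eq_zero (halt : IsAlt R) (he : e * e = e)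
    {w : R} (hw : lieTriple w e e = 0) : ∃ u ∈ P11 e, ∃ v ∈ P22 e, w = u + v := by
  refine ⟨peirce11 e w, halt.peirce11_mem he w, peirce22 e w, halt.peirce22_mem he w, ?_⟩
  rw [halt.lieTriple_idem_idem_eq_peirce12_add_peirce21 he] at hw
  simp only [peirce11, peirce12, peirce21, peirce22] at hw ⊢
  linear_combination (norm := abel) hw

end IsAlt

theorem addDefect_eq_zero_iff {D : R → R} {x y : R} :
    addDefect D x y = 0 ↔ D (x + y) = D x + D y := by
  rw [addDefect, sub_sub, sub_eq_zero]

theorem addDefect_comm (D : R → R) (x y : R) : addDefect D x y = addDefect D y x := by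
  rw [addDefect, addDefect, add_comm x, sub_sub, sub_sub, add_comm (D x)]

namespace IsMultLieTripleDeriv

variable {D : R → R} {e m n p q : R}

theorem map_zero (hD : IsMultLieTripleDeriv D) : D 0 = 0 := by
  simpa [lieTriple, lieComm] using hD 0 0 0

theorem addDefect_zero_left (hD : IsMultLieTripleDeriv D) (x : R) : addDefect D 0 x = 0 := by
  simp [addDefect, hD.map_zero]

theorem addDefect_zero_right (hD : IsMultLieTripleDeriv D) (x : R) : addDefect D x 0 = 0 := by
  simp [addDefect, hD.map_zero]

theorem lieTriple_addDefect (hD : IsMultLieTripleDeriv D) (x₁ x₂ y z : R) :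
    lieTriple (addDefect D x₁ x₂) y z = addDefect D (lieTriple x₁ y z) (lieTriple x₂ y z) := by
  have h := hD (x₁ + x₂) y z
  rw [lieTriple_add_left] at h
  simp only [addDefect, h, hD x₁ y z, hD x₂ y z, lieTriple_sub_left, lieTriple_add_left]
  abel

theorem addDefect_lieTriple_sub_middle (hD : IsMultLieTripleDeriv D) (x₁ x₂ y y' z : R) :
    addDefect D (lieTriple x₁ y z - lieTriple x₁ y' z) (lieTriple x₂ y z - lieTriple x₂ y' z) =
      addDefect D (lieTriple x₁ y z) (lieTriple x₂ y z) -
        addDefect D (lieTriple x₁ y' z) (lieTriple x₂ y' z) := by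
  simp only [← lieTriple_sub_middle, ← hD.lieTriple_addDefect]

theorem addDefect_eq_zero_of_mem_P12_P21 (hD : IsMultLieTripleDeriv D) (halt : IsAlt R)
    (hm : m ∈ P12 e) (hn : n ∈ P21 e) : addDefect D m n = 0 := by
  have h := hD.addDefect_lieTriple_sub_middle e n e m e
  rw [lieTriple_self_left, lieTriple_idem_idem_of_mem_P21 hn, lieTriple_idem_left_of_mem_P12 hm,
    halt.lieTriple_of_mem_P21_P12 hn hm, hD.addDefect_zero_left, hD.addDefect_zero_right] at h
  simpa using h

theorem addDefect_eq_zero_of_mem_P12 (hD : IsMultLieTripleDeriv D) (halt : IsAlt R)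
    (hm : m ∈ P12 e) (hp : p ∈ P12 e) : addDefect D m p = 0 := by
  have hc := halt.lieComm_mem_P21_of_mem_P12 hp hm
  have h := hD.addDefect_lieTriple_sub_middle e (p + lieComm p m) e m e
  have h₁ : lieTriple (p + lieComm p m) e e = p + lieComm p m := by
    rw [lieTriple_add_left, lieTriple_idem_idem_of_mem_P12 hp, lieTriple_idem_idem_of_mem_P21 hc]
  have h₂ : lieTriple (p + lieComm p m) m e = lieComm p m := by
    rw [lieTriple_add_left, halt.lieTriple_of_mem_P21_P12 hc hm, add_zero, lieTriple,
      lieComm_idem_of_mem_P21 hc]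
  rw [lieTriple_self_left, lieTriple_idem_left_of_mem_P12 hm, h₁, h₂, hD.addDefect_zero_left,
    hD.addDefect_eq_zero_of_mem_P12_P21 halt (neg_mem_P12 hm) hc] at h
  simpa using h

theorem addDefect_eq_zero_of_mem_P21 (hD : IsMultLieTripleDeriv D) (halt : IsAlt R)
    (hn : n ∈ P21 e) (hq : q ∈ P21 e) : addDefect D n q = 0 := by
  have hc := halt.lieComm_mem_P12_of_mem_P21 hq hn
  have h := hD.addDefect_lieTriple_sub_middle e (q - lieComm q n) e n e
  have h₁ : lieTriple (q - lieComm q n) e e = q - lieComm q n := by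
    rw [lieTriple_sub_left, lieTriple_idem_idem_of_mem_P21 hq, lieTriple_idem_idem_of_mem_P12 hc]
  have h₂ : lieTriple (q - lieComm q n) n e = -lieComm q n := by
    rw [lieTriple_sub_left, halt.lieTriple_of_mem_P12_P21 hc hn, sub_zero, lieTriple,
      lieComm_idem_of_mem_P12 hc]
  rw [lieTriple_self_left, lieTriple_idem_left_of_mem_P21 hn, h₁, h₂, hD.addDefect_zero_left,
    addDefect_comm D (-n),
    hD.addDefect_eq_zero_of_mem_P12_P21 halt (neg_mem_P12 hc) (neg_mem_P21 hn)] at h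
  simpa using h

theorem addDefect_eq_zero_of_mem_P12_add_P21 (hD : IsMultLieTripleDeriv D) (halt : IsAlt R)
    (hm : m ∈ P12 e) (hn : n ∈ P21 e) (hp : p ∈ P12 e) (hq : q ∈ P21 e) :
    addDefect D (m + n) (p + q) = 0 := by
  have hmp_nq := hD.addDefect_eq_zero_of_mem_P12_P21 halt (add_mem_P12 hm hp) (add_mem_P21 hn hq)
  rw [addDefect_eq_zero_iff, add_add_add_comm, addDefect_eq_zero_iff.1 hmp_nq,
    addDefect_eq_zero_iff.1 (hD.addDefect_eq_zero_of_mem_P12 halt hm hp),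
    addDefect_eq_zero_iff.1 (hD.addDefect_eq_zero_of_mem_P21 halt hn hq),
    addDefect_eq_zero_iff.1 (hD.addDefect_eq_zero_of_mem_P12_P21 halt hm hn),
    addDefect_eq_zero_iff.1 (hD.addDefect_eq_zero_of_mem_P12_P21 halt hp hq)]
  abel

theorem lieTriple_addDefect_idem (hD : IsMultLieTripleDeriv D) (halt : IsAlt R)
    (he : e * e = e) (a b y : R) : lieTriple (addDefect D a b) y e = 0 := by
  rw [hD.lieTriple_addDefect, lieTriple, lieTriple, lieComm_eq_neg_peirce12_add_peirce21 e,
    lieComm_eq_neg_peirce12_add_peirce21 e]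
  exact hD.addDefect_eq_zero_of_mem_P12_add_P21 halt (neg_mem_P12 (halt.peirce12_mem he _))
    (halt.peirce21_mem he _) (neg_mem_P12 (halt.peirce12_mem he _)) (halt.peirce21_mem he _)

end IsMultLieTripleDeriv

end

theorem stmt6_general {R : Type*} [NonUnitalNonAssocRing R] (halt : IsAlt R)
    (e₁ : R) (he : e₁ * e₁ = e₁)
    (hcondi : ∀ a ∈ P11 e₁, ∀ b ∈ P22 e₁,
      (∀ x ∈ P12 e₁, (a + b) * x = x * (a + b)) → a + b ∈ rctr R)
    (D : R → R)
    (hD : ∀ x y z : R,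
      D ((x * y - y * x) * z - z * (x * y - y * x)) =
        ((D x * y - y * D x) * z - z * (D x * y - y * D x)) +
        ((x * D y - D y * x) * z - z * (x * D y - D y * x)) +
        ((x * y - y * x) * D z - D z * (x * y - y * x))) :
    ∀ a b : R, ∃ w ∈ rctr R, D (a + b) = D a + D b + w := by
  intro a b
  have hDer : IsMultLieTripleDeriv D := hD
  obtain ⟨u, hu, v, hv, huv⟩ := halt.exists_mem_P11_P22_of_lieTriple_idem_idem_eq_zero he
    (hDer.lieTriple_addDefect_idem halt he a b e₁)
  refine ⟨u + v, hcondi u hu v hv fun x hx => ?_, ?_⟩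
  · have h := hDer.lieTriple_addDefect_idem halt he a b x
    rw [huv, lieTriple,
      lieComm_idem_of_mem_P12 (halt.lieComm_add_mem_P12_of_mem_P11_P22 hu hv hx), neg_eq_zero,
      lieComm, sub_eq_zero] at h
    exact h
  · rw [← huv, addDefect]
    abel

theorem stmt6 {R : Type*} [NonUnitalNonAssocRing R] (halt : IsAlt R)
    (e₁ : R) (he : e₁ * e₁ = e₁) (hne : e₁ ≠ 0)
    (hnu : ¬ ∀ x : R, e₁ * x = x ∧ x * e₁ = x)
    (hcondi : ∀ a ∈ P11 e₁, ∀ b ∈ P22 e₁,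
      (∀ x ∈ P12 e₁, (a + b) * x = x * (a + b)) → a + b ∈ rctr R)
    (hcondii : ∀ a ∈ P11 e₁, ∀ b ∈ P22 e₁,
      (∀ x ∈ P21 e₁, (a + b) * x = x * (a + b)) → a + b ∈ rctr R)
    (D : R → R)
    (hD : ∀ x y z : R,
      D ((x * y - y * x) * z - z * (x * y - y * x)) =
        ((D x * y - y * D x) * z - z * (D x * y - y * D x)) +
        ((x * D y - D y * x) * z - z * (x * D y - D y * x)) +
        ((x * y - y * x) * D z - D z * (x * y - y * x))) :
    ∀ a b : R, ∃ w ∈ rctr R, D (a + b) = D a + D b + w :=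
  stmt6_general halt e₁ he hcondi D hD
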